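/- Let p ∈ ℕ with p ≥ 1, let m ∈ ℕ, and let n, n' be natural numbers with n < 2^m and n' < 2^m. Set B_F = 2^p − 2^{−p}, q := B_F · interleave(sbin_m(n), 1_m) ∈ ℝ^{2m}, k' := interleave(sbin_m(n'), −1_m) ∈ ℝ^{2m}, and let v := max(−B_F, min(B_F, ⟨q, k'⟩)) be the exact inner product clamped to the interval [−B_F, B_F]. Then round_p(exp(v)) = 1 if n = n', and round_p(exp(v)) = 0 if n ≠ n'. (This is the full conclusion of the positional-encoding lemma: the exponentiated attention score between positions n and n' is 1 exactly when the positions match and 0 otherwise.) -/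

import Mathlib

/-- The binary encoding `bin m n ∈ {0,1}^m` of a natural number `n < 2^m`:
its `i`-th entry is the `i`-th binary digit of `n`. -/
def bin (m n : ℕ) : Fin m → ℝ := fun i => ((n / 2 ^ i.val) % 2 : ℕ)

/-- The signed binary encoding `sbin m n ∈ {-1,1}^m`, `sbin m n i = 2 ⬝ bin m n i - 1`. -/
def sbin (m n : ℕ) : Fin m → ℝ := fun i => 2 * bin m n i - 1

/-- The interleaving of two vectors `x, y ∈ ℝ^m` into a vector in `ℝ^{2m}`. -/
def interleave (m : ℕ) (x y : Fin m → ℝ) (i : Fin (2 * m)) : ℝ :=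
  if i.val % 2 = 0 then x ⟨i.val / 2, by have := i.isLt; omega⟩
  else y ⟨i.val / 2, by have := i.isLt; omega⟩

/-- The set of fixed-point numbers of precision `p`:
`F_p = { s·a·2^{-p} : s ∈ {1,-1}, a ∈ ℕ, a ≤ 2^{2p} - 1 }`. -/
def Fp (p : ℕ) : Set ℝ :=
  {x | ∃ (s : ℝ) (a : ℕ), (s = 1 ∨ s = -1) ∧ a ≤ 2 ^ (2 * p) - 1 ∧
    x = s * a * (2 : ℝ) ^ (-(p : ℤ))}

/-- The maximal fixed-point number `B_F = 2^p - 2^{-p}`. -/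
noncomputable def BF (p : ℕ) : ℝ := 2 ^ p - (2 : ℝ) ^ (-(p : ℤ))

/-- `r` is the rounding of `x` to precision `p`: `r ∈ F_p` is closest to `x` among elements
of `F_p`, with ties broken in favor of the element of smaller absolute value. -/
def IsRound (p : ℕ) (x r : ℝ) : Prop :=
  r ∈ Fp p ∧ ∀ y ∈ Fp p, |x - r| < |x - y| ∨ (|x - r| = |x - y| ∧ |r| ≤ |y|)

/-! The `j`-th pair of coordinates contributes `B_F (sbin n j ⬝ sbin n' j - 1)` to `⟨q, k'⟩`,
which is `0` when the `j`-th binary digits of `n` and `n'` agree and `-2 B_F` otherwise.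
Hence the clamped score is `0` when `n = n'` and `-B_F` otherwise. Now `exp 0 = 1 ∈ F_p`
rounds to itself, while `exp (-B_F) ≤ 2^{-p-1}` is at most half the smallest positive
fixed-point number, so it rounds to `0`. -/

theorem sum_interleave {m : ℕ} (x y : Fin m → ℝ) :
    ∑ i, interleave m x y i = ∑ j, (x j + y j) := by
  -- reindex `Fin (2 * m)` by `(j, b) ↦ 2 j + b`, which visits the coordinates of `x j`, `y j` in turn
  rw [← (finProdFinEquiv.trans (finCongr (mul_comm m 2))).sum_comp, Fintype.sum_prod_type]
  refine Finset.sum_congr rfl fun j _ => ?_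
  have hodd : (1 + 2 * (j : ℕ)) / 2 = j := by omega
  simp [Fin.sum_univ_two, interleave, finProdFinEquiv, hodd]

theorem interleave_mul {m : ℕ} (x y x' y' : Fin m → ℝ) (i : Fin (2 * m)) :
    interleave m x y i * interleave m x' y' i = interleave m (x * x') (y * y') i := by
  unfold interleave
  split_ifs <;> rfl

theorem sum_mul_interleave_mul_interleave {m : ℕ} (c : ℝ) (x y x' y' : Fin m → ℝ) :
    ∑ i, c * interleave m x y i * interleave m x' y' i =
      c * ∑ j, (x j * x' j + y j * y' j) := by
  simp only [mul_assoc, ← Finset.mul_sum, interleave_mul, sum_interleave, Pi.mul_apply]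

theorem sbin_mul_sbin (m n n' : ℕ) (j : Fin m) :
    sbin m n j * sbin m n' j = if n / 2 ^ j.val % 2 = n' / 2 ^ j.val % 2 then 1 else -1 := by
  simp only [sbin, bin]
  rcases Nat.mod_two_eq_zero_or_one (n / 2 ^ j.val) with h | h <;>
    rcases Nat.mod_two_eq_zero_or_one (n' / 2 ^ j.val) with h' | h' <;>
    norm_num [h, h']

theorem exists_lt_div_two_pow_mod_two_ne {m n n' : ℕ} (hn : n < 2 ^ m) (hn' : n' < 2 ^ m)
    (h : n ≠ n') : ∃ j < m, n / 2 ^ j % 2 ≠ n' / 2 ^ j % 2 := by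
  by_contra! hbits
  refine h (Nat.eq_of_testBit_eq fun j => ?_)
  rcases lt_or_ge j m with hj | hj
  · simp only [Nat.testBit_eq_decide_div_mod_eq, hbits j hj]
  · have hm : 2 ^ m ≤ 2 ^ j := Nat.pow_le_pow_right two_pos hj
    rw [Nat.testBit_eq_false_of_lt (hn.trans_le hm), Nat.testBit_eq_false_of_lt (hn'.trans_le hm)]

theorem sum_sbin_mul_sbin_self_sub_one (m n : ℕ) :
    ∑ j, (sbin m n j * sbin m n j - 1) = 0 :=
  Finset.sum_eq_zero fun j _ => by simp [sbin_mul_sbin]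

theorem sum_sbin_mul_sbin_sub_one_le {m n n' : ℕ} (hn : n < 2 ^ m) (hn' : n' < 2 ^ m)
    (h : n ≠ n') : ∑ j, (sbin m n j * sbin m n' j - 1) ≤ -2 := by
  obtain ⟨j, hj, hbit⟩ := exists_lt_div_two_pow_mod_two_ne hn hn' h
  rw [Fintype.sum_eq_add_sum_compl ⟨j, hj⟩]
  have hrest : ∑ i ∈ {⟨j, hj⟩}ᶜ, (sbin m n i * sbin m n' i - 1) ≤ 0 :=
    Finset.sum_nonpos fun i _ => by rw [sbin_mul_sbin]; split_ifs <;> norm_num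
  rw [sbin_mul_sbin, if_neg hbit]
  linarith

theorem BF_nonneg (p : ℕ) : 0 ≤ BF p := by
  have h1 : (2 : ℝ) ^ (-(p : ℤ)) ≤ 1 := zpow_le_one_of_nonpos₀ one_le_two (by omega)
  have h2 : (1 : ℝ) ≤ 2 ^ p := one_le_pow₀ one_le_two
  unfold BF
  linarith

theorem zero_mem_Fp (p : ℕ) : (0 : ℝ) ∈ Fp p := ⟨1, 0, Or.inl rfl, by simp, by simp⟩

theorem one_mem_Fp {p : ℕ} (hp : 1 ≤ p) : (1 : ℝ) ∈ Fp p := by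
  refine ⟨1, 2 ^ p, Or.inl rfl, ?_, ?_⟩
  · have h2 : 2 ≤ 2 ^ p := Nat.le_self_pow (by omega) 2
    have : 2 ^ p * 2 ≤ 2 ^ (2 * p) := by rw [two_mul, pow_add]; exact Nat.mul_le_mul_left _ h2
    omega
  · simp [zpow_neg]

theorem two_zpow_neg_le_abs_of_mem_Fp {p : ℕ} {r : ℝ} (hr : r ∈ Fp p) (h : r ≠ 0) :
    (2 : ℝ) ^ (-(p : ℤ)) ≤ |r| := by
  obtain ⟨s, a, hs, -, rfl⟩ := hr
  have ha : (1 : ℝ) ≤ a := by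
    have : a ≠ 0 := by rintro rfl; simp at h
    exact_mod_cast Nat.one_le_iff_ne_zero.mpr this
  have hs' : |s| = 1 := by rcases hs with rfl | rfl <;> simp
  rw [abs_mul, abs_mul, hs', one_mul, Nat.abs_cast, abs_of_pos (by positivity)]
  exact le_mul_of_one_le_left (by positivity) ha

theorem IsRound.eq_of_mem {p : ℕ} {x r : ℝ} (h : IsRound p x r) (hx : x ∈ Fp p) : r = x := by
  rcases h.2 x hx with hlt | ⟨heq, -⟩
  · exact absurd hlt (by simp)
  · simpa [sub_eq_zero, eq_comm] using heq

theorem IsRound.eq_zero_of_abs_le {p : ℕ} {x r : ℝ} (h : IsRound p x r)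
    (hx : |x| ≤ (2 : ℝ) ^ (-(p : ℤ)) / 2) : r = 0 := by
  rcases h.2 0 (zero_mem_Fp p) with hlt | ⟨-, hle⟩
  · by_contra hr
    have := two_zpow_neg_le_abs_of_mem_Fp h.1 hr
    have := abs_sub_abs_le_abs_sub r x
    rw [sub_zero, abs_sub_comm] at hlt
    linarith
  · simpa using hle

theorem exp_neg_BF_le {p : ℕ} (hp : 1 ≤ p) : Real.exp (-BF p) ≤ (2 : ℝ) ^ (-(p : ℤ)) / 2 := by
  have hpow : (p : ℝ) + 1 ≤ 2 ^ p := by exact_mod_cast Nat.lt_two_pow_self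
  have hinv : (2 : ℝ) ^ (-(p : ℤ)) ≤ 1 / 2 := by
    simpa using zpow_le_zpow_right₀ (one_le_two : (1 : ℝ) ≤ 2) (show -(p : ℤ) ≤ -1 by omega)
  have hp' : (1 : ℝ) ≤ p := by exact_mod_cast hp
  have hlog : ((p : ℝ) + 1) * Real.log 2 ≤ BF p := by
    have := Real.log_two_lt_d9
    unfold BF
    nlinarith
  have h2 : (2 : ℝ) ^ (-(p : ℤ)) / 2 = Real.exp (-(((p : ℝ) + 1) * Real.log 2)) := by
    rw [Real.exp_neg, show (p : ℝ) + 1 = ((p + 1 : ℕ) : ℝ) by push_cast; ring,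
      Real.exp_nat_mul, Real.exp_log two_pos, zpow_neg, zpow_natCast, pow_succ]
    field_simp
  rw [h2, Real.exp_le_exp]
  linarith

/-- Positional-encoding lemma: with `q = B_F ⬝ interleave(sbin m n, 1)` and
`k' = interleave(sbin m n', -1)`, and `v` the inner product `⟨q, k'⟩` clamped to
`[-B_F, B_F]`, the rounded exponentiated attention score `round_p (exp v)` is `1`
exactly when `n = n'` and `0` otherwise. -/
theorem rounded_exp_attention_score (p : ℕ) (hp : 1 ≤ p) (m n n' : ℕ)
    (hn : n < 2 ^ m) (hn' : n' < 2 ^ m) (r : ℝ)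
    (hr : IsRound p
      (Real.exp (max (-(BF p)) (min (BF p)
        (∑ i, (BF p * interleave m (sbin m n) (fun _ => 1) i) *
          interleave m (sbin m n') (fun _ => -1) i)))) r) :
    (n = n' → r = 1) ∧ (n ≠ n' → r = 0) := by
  have hB := BF_nonneg p
  simp only [sum_mul_interleave_mul_interleave, mul_neg_one, ← sub_eq_add_neg] at hr
  constructor
  · rintro rfl
    rw [sum_sbin_mul_sbin_self_sub_one, mul_zero, min_eq_right hB,
      max_eq_right (neg_nonpos.mpr hB), Real.exp_zero] at hr
    exact hr.eq_of_mem (one_mem_Fp hp)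
  · intro hne
    have hscore := sum_sbin_mul_sbin_sub_one_le hn hn' hne
    rw [min_eq_right (by nlinarith), max_eq_left (by nlinarith)] at hr
    exact hr.eq_zero_of_abs_le ((abs_of_pos (Real.exp_pos _)).trans_le (exp_neg_BF_le hp))
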